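/- arXiv:2309.05902 — 4 statements merged into one kernel-verified Lean document; each statement's English description precedes it below -/
import Mathlib

section
/- For every natural number n ≥ 1, in the standard Game of Cycles, the line sub-game of type 3 — a path of n unmarked edges with one pre-marked directed edge attached at the left end and directed away from the path (•←•—•⋯•—•) — has Grundy value n − 1. -/
/-- Edge state on a path/cycle: `none` = unmarked, `some true` = directed "rightwards"
(from vertex `i` to vertex `i+1`), `some false` = directed "leftwards". -/
abbrev EdgeState := Option Bool

/-- Minimum excludant of a set of naturals: the least natural number not in the set. -/
noncomputable def mex (S : Set ℕ) : ℕ := sInf {n | n ∉ S}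

/-- Generic fueled Grundy value of an impartial game with move function `moves`
(the fuel always dominates the number of remaining moves in our uses, so this
computes the Sprague–Grundy value). -/
noncomputable def grundyAux {α : Type} (moves : α → Set α) : ℕ → α → ℕ
  | 0, _ => 0
  | k+1, x => mex ((grundyAux moves k) '' (moves x))

/-- A line position (list of edge states, vertex `j+1` lying between edges `j` and
`j+1`) is admissible: no non-exempt vertex is a sink (all incident edges marked and
directed toward it) and, unless `sourceAllowed`, no non-exempt vertex is a source
(all incident edges marked and directed away from it).  The left endpoint (vertex
`0`) is exempt iff `exL`, the right endpoint iff `exR`. -/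
def LineOK (sourceAllowed exL exR : Bool) (es : List EdgeState) : Prop :=
  (∀ j : ℕ, ¬ (es[j]? = some (some true) ∧ es[j+1]? = some (some false))) ∧
  (sourceAllowed = true ∨
    ∀ j : ℕ, ¬ (es[j]? = some (some false) ∧ es[j+1]? = some (some true))) ∧
  (exL = true ∨ (es.head? ≠ some (some false) ∧
    (sourceAllowed = true ∨ es.head? ≠ some (some true)))) ∧
  (exR = true ∨ (es.getLast? ≠ some (some true) ∧
    (sourceAllowed = true ∨ es.getLast? ≠ some (some false))))

/-- A legal move on a line position marks an unmarked edge with one of the two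
directions so that the resulting position is admissible. -/
def lineMoves (sourceAllowed exL exR : Bool) (es : List EdgeState) :
    Set (List EdgeState) :=
  { es' | ∃ (j : ℕ) (d : Bool), es[j]? = some none ∧ es' = es.set j (some d) ∧
      LineOK sourceAllowed exL exR es' }

/-- Grundy value (Nimber) of the line (sub-)game with `n` unmarked edges.
`l` (resp. `r`) is an optional pre-marked directed edge attached at the left
(resp. right) end of the path (`some true` pointing rightwards, `some false`
pointing leftwards); the outer endpoint of a pre-marked edge is exempt from the
no-sink (and, when sources are disallowed, no-source) restriction.
`sourceAllowed = false` gives the standard Game of Cycles, `sourceAllowed = true`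
gives Cycles with Sources. -/
noncomputable def lineNim (sourceAllowed : Bool) (l r : Option Bool) (n : ℕ) : ℕ :=
  let es : List EdgeState :=
    (l.map some).toList ++ List.replicate n none ++ (r.map some).toList
  grundyAux (lineMoves sourceAllowed l.isSome r.isSome) es.length es

/-!
A position reachable from •←•—•⋯•—• is a block `Q` (a stretch of edges that begins and ends
with a marked edge and in which adjacent marked edges point the same way) followed by `t + 1`
unmarked edges. The last of these can never be marked, as the right endpoint would become a
sink or a source, so the tail is a Nim heap of size `t`: marking one of its first `t` edges
leaves any smaller heap, and the new block can be given either parity, except when the marked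
edge touches the block and must continue its direction. Inside the block every gap of `k`
unmarked edges takes exactly `k` moves if its ends point the same way and `k - 1` otherwise,
so the block is a game of fixed parity `p`. Hence the Grundy value is `t ^^^ p`, which for the
starting position (`Q` the pre-marked edge, `t = n - 1`) is `n - 1`.
-/

namespace GameOfCycles

open List

def Compat : EdgeState → EdgeState → Prop
  | some a, some b => a = b
  | _, _ => True

theorem compat_iff {x y : EdgeState} :
    Compat x y ↔
      ¬(x = some true ∧ y = some false) ∧ ¬(x = some false ∧ y = some true) := by
  rcases x with _ | _ | _ <;> rcases y with _ | _ | _ <;> simp [Compat]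

theorem lineOK_false_true_false_iff (es : List EdgeState) :
    LineOK false true false es ↔ es.IsChain Compat ∧ ∀ d, es.getLast? ≠ some (some d) := by
  simp only [LineOK, Bool.false_eq_true, false_or, true_or, true_and, isChain_iff_getElem,
    compat_iff, List.getElem?_eq_some_iff, Bool.forall_bool]
  constructor
  · rintro ⟨hsink, hsource, htrue, hfalse⟩
    exact ⟨fun i hi => ⟨fun h => hsink i ⟨⟨by omega, h.1⟩, hi, h.2⟩,
      fun h => hsource i ⟨⟨by omega, h.1⟩, hi, h.2⟩⟩, hfalse, htrue⟩
  · rintro ⟨hchain, hfalse, htrue⟩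
    exact ⟨fun j ⟨⟨_, h1⟩, hj, h2⟩ => (hchain j hj).1 ⟨h1, h2⟩,
      fun j ⟨⟨_, h1⟩, hj, h2⟩ => (hchain j hj).2 ⟨h1, h2⟩, htrue, hfalse⟩

theorem compat_none_right (x : EdgeState) : Compat x none := by
  rcases x with _ | _ <;> trivial

theorem isChain_append_replicate_none_append {L M : List EdgeState} {i : ℕ}
    (hL : L.IsChain Compat) (hM : M.IsChain Compat)
    (hLM : i = 0 → ∀ x ∈ L.getLast?, ∀ y ∈ M.head?, Compat x y) :
    (L ++ replicate i none ++ M).IsChain Compat := by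
  induction i generalizing M with
  | zero => simpa using isChain_append.2 ⟨hL, hM, hLM rfl⟩
  | succ i ih =>
    rw [replicate_succ', append_assoc, append_assoc, singleton_append, ← append_assoc]
    refine ih (isChain_cons.2 ⟨fun _ _ => trivial, hM⟩) fun _ x _ y hy => ?_
    obtain rfl : y = none := by simpa using hy.symm
    exact compat_none_right x

theorem isChain_append_replicate_none_singleton {L : List EdgeState} {e c : Bool} {i : ℕ}
    (hlast : L.getLast? = some (some e)) (hL : L.IsChain Compat) (hc : i = 0 → c = e) :
    (L ++ replicate i none ++ [some c]).IsChain Compat := by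
  refine isChain_append_replicate_none_append hL (isChain_singleton _) ?_
  rintro rfl x hx y hy
  simp only [hlast, head?_cons, Option.mem_def, Option.some_inj] at hx hy
  subst hx hy
  exact (hc rfl).symm

structure IsBlock (d e : Bool) (Q : List EdgeState) : Prop where
  head?_eq : Q.head? = some (some d)
  getLast?_eq : Q.getLast? = some (some e)
  isChain : Q.IsChain Compat

-- The parity of the number of moves left inside a block with end directions `d` and `e`.
def blockParity (d e : Bool) (Q : List EdgeState) : ℕ :=
  (Q.count none + if d = e then 0 else 1) % 2

theorem blockParity_append {d c : Bool} {Q : List EdgeState} {i : ℕ} :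
    blockParity d c (Q ++ replicate i none ++ [some c]) =
      (Q.count none + i + if d = c then 0 else 1) % 2 := by
  simp [blockParity]

theorem count_none_set_add_one {Q : List EdgeState} {j : ℕ} {c : Bool}
    (hj : Q[j]? = some none) : (Q.set j (some c)).count none + 1 = Q.count none := by
  obtain ⟨hlt, hnone⟩ := List.getElem?_eq_some_iff.1 hj
  simp [count_set hlt, hnone, Nat.sub_add_cancel (count_pos_iff.2 (mem_of_getElem? hj))]

theorem blockParity_set {d e : Bool} {Q : List EdgeState} {j : ℕ} {c : Bool}
    (hj : Q[j]? = some none) :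
    blockParity d e (Q.set j (some c)) = 1 - blockParity d e Q := by
  have := count_none_set_add_one (c := c) hj
  simp only [blockParity]
  split_ifs <;> omega

theorem exists_blockParity_append_eq (d : Bool) (Q : List EdgeState) (i : ℕ) {q : ℕ}
    (hq : q < 2) : ∃ c, blockParity d c (Q ++ replicate i none ++ [some c]) = q := by
  simp only [blockParity_append]
  by_cases h : (Q.count none + i) % 2 = q
  · exact ⟨d, by simpa using h⟩
  · exact ⟨!d, by simp; omega⟩

theorem exists_set_isChain_of_parity : ∀ {a e : Bool} {P : List EdgeState},
    (some a :: P).IsChain Compat → (some a :: P).getLast? = some (some e) →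
    blockParity a e P = 1 →
    ∃ j c, P[j]? = some none ∧ (some a :: P.set j (some c)).IsChain Compat
  | a, e, [], _, hlast, hpar => by simp_all [blockParity]
  | _, _, [none], _, hlast, _ => by simp at hlast
  | a, e, some b :: P, hchain, hlast, hpar => by
    obtain ⟨rfl, hchain⟩ := isChain_cons_cons.1 hchain
    obtain ⟨j, c, hj, hc⟩ := exists_set_isChain_of_parity hchain
      (by rwa [getLast?_cons_cons] at hlast) (by simpa [blockParity] using hpar)
    exact ⟨j + 1, c, hj, isChain_cons_cons.2 ⟨rfl, hc⟩⟩
  | a, _, none :: none :: P, hchain, _, _ =>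
    ⟨0, a, rfl, isChain_cons_cons.2 ⟨rfl, isChain_cons_cons.2
      ⟨trivial, (isChain_cons_cons.1 (isChain_cons_cons.1 hchain).2).2⟩⟩⟩
  | a, e, none :: some b :: P, hchain, hlast, hpar => by
    have hrest := (isChain_cons_cons.1 (isChain_cons_cons.1 hchain).2).2
    by_cases hba : b = a
    · exact ⟨0, a, rfl,
        isChain_cons_cons.2 ⟨rfl, isChain_cons_cons.2 ⟨hba.symm, hrest⟩⟩⟩
    · obtain ⟨j, c, hj, hc⟩ := exists_set_isChain_of_parity hrest
        (by rwa [getLast?_cons_cons, getLast?_cons_cons] at hlast)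
        (by revert hpar; cases a <;> cases b <;> cases e <;> simp_all [blockParity] <;> omega)
      exact ⟨j + 2, c, hj,
        isChain_cons_cons.2 ⟨trivial, isChain_cons_cons.2 ⟨trivial, hc⟩⟩⟩

namespace IsBlock

variable {d e : Bool} {Q : List EdgeState}

theorem exists_set_isChain (hQ : IsBlock d e Q) (hpar : blockParity d e Q = 1) :
    ∃ j c, Q[j]? = some none ∧ (Q.set j (some c)).IsChain Compat := by
  obtain ⟨P, rfl⟩ := head?_eq_some_iff.1 hQ.head?_eq
  obtain ⟨j, c, hj, hc⟩ := exists_set_isChain_of_parity hQ.isChain hQ.getLast?_eq (by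
    simpa [blockParity] using hpar)
  exact ⟨j + 1, c, hj, hc⟩

theorem set {j : ℕ} {c : Bool} (hQ : IsBlock d e Q) (hj : Q[j]? = some none)
    (hc : (Q.set j (some c)).IsChain Compat) : IsBlock d e (Q.set j (some c)) := by
  have hne : ∀ k, Q[k]? ≠ some none → j ≠ k := by rintro k hk rfl; exact hk hj
  refine ⟨?_, ?_, hc⟩
  · rw [head?_eq_getElem?, getElem?_set_ne (hne 0 (by simp [← head?_eq_getElem?, hQ.head?_eq])),
      ← head?_eq_getElem?, hQ.head?_eq]
  · rw [getLast?_eq_getElem?, length_set,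
      getElem?_set_ne (hne _ (by simp [← getLast?_eq_getElem?, hQ.getLast?_eq])),
      ← getLast?_eq_getElem?, hQ.getLast?_eq]

theorem append {i : ℕ} {c : Bool} (hQ : IsBlock d e Q) (hc : i = 0 → c = e) :
    IsBlock d c (Q ++ replicate i none ++ [some c]) :=
  ⟨by simp [hQ.head?_eq], getLast?_concat,
    isChain_append_replicate_none_singleton hQ.getLast?_eq hQ.isChain hc⟩

end IsBlock

theorem set_replicate_add {α : Type*} (a x : α) (i n : ℕ) :
    (replicate (i + 1 + n) a).set i x = replicate i a ++ x :: replicate n a := by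
  rw [Nat.add_assoc, replicate_add, set_append_right _ _ (by simp), length_replicate,
    Nat.sub_self, Nat.add_comm, replicate_succ, set_cons_zero]

theorem isChain_append_replicate_none {L : List EdgeState} (hL : L.IsChain Compat) (n : ℕ) :
    (L ++ replicate n none).IsChain Compat := by
  simpa using isChain_append_replicate_none_append (i := n) hL isChain_nil (by simp)

theorem lineOK_append_replicate_none {L : List EdgeState} (hL : L.IsChain Compat) (n : ℕ) :
    LineOK false true false (L ++ replicate (n + 1) none) := by
  refine (lineOK_false_true_false_iff _).2 ⟨isChain_append_replicate_none hL _, fun d => ?_⟩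
  simp [getLast?_append, getLast?_replicate]

theorem mem_lineMoves_append_replicate_iff {e : Bool} {Q es : List EdgeState} {t : ℕ}
    (hlast : Q.getLast? = some (some e)) (hQ : Q.IsChain Compat) :
    es ∈ lineMoves false true false (Q ++ replicate (t + 1) none) ↔
      (∃ j c, Q[j]? = some none ∧ (Q.set j (some c)).IsChain Compat ∧
        es = Q.set j (some c) ++ replicate (t + 1) none) ∨
      ∃ i t' c, t = i + 1 + t' ∧ (i = 0 → c = e) ∧
        es = Q ++ replicate i none ++ [some c] ++ replicate (t' + 1) none := by
  constructor
  · rintro ⟨j, c, hj, rfl, hok⟩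
    rw [lineOK_false_true_false_iff] at hok
    by_cases hjQ : j < Q.length
    · rw [getElem?_append_left hjQ] at hj
      rw [set_append_left _ _ hjQ] at hok ⊢
      exact Or.inl ⟨j, c, hj, (isChain_append.1 hok.1).1, rfl⟩
    obtain ⟨i, rfl⟩ : ∃ i, j = Q.length + i := ⟨j - Q.length, by omega⟩
    rw [getElem?_append_right (by omega), Nat.add_sub_cancel_left, getElem?_replicate] at hj
    have hit : i < t + 1 := by
      by_contra h
      simp [h] at hj
    obtain ⟨n, hn⟩ : ∃ n, t + 1 = i + 1 + n := ⟨t - i, by omega⟩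
    rw [set_append_right _ _ (by omega), Nat.add_sub_cancel_left, hn, set_replicate_add] at hok ⊢
    obtain _ | t' := n
    · exact absurd (by simp [getLast?_append]) (hok.2 c)
    refine Or.inr ⟨i, t', c, by omega, ?_, by simp⟩
    rintro rfl
    exact ((isChain_append.1 hok.1).2.2 _ hlast _ rfl : e = c).symm
  · rintro (⟨j, c, hj, hc, rfl⟩ | ⟨i, t', c, rfl, hc, rfl⟩)
    · have hjQ : j < Q.length := (List.getElem?_eq_some_iff.1 hj).1
      refine ⟨j, c, by rwa [getElem?_append_left hjQ], (set_append_left _ _ hjQ).symm,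
        lineOK_append_replicate_none hc t⟩
    · refine ⟨Q.length + i, c, ?_, ?_, ?_⟩
      · simp [getElem?_append_right, getElem?_replicate]
        omega
      · rw [set_append_right _ _ (by omega), Nat.add_sub_cancel_left, Nat.add_assoc _ t',
          set_replicate_add]
        simp
      · exact lineOK_append_replicate_none (isChain_append_replicate_none_singleton hlast hQ hc) t'

theorem mex_eq {S : Set ℕ} {a : ℕ} (hlt : ∀ m < a, m ∈ S) (ha : a ∉ S) : mex S = a :=
  le_antisymm (Nat.sInf_le ha) (le_csInf ⟨a, ha⟩ fun _ hb => not_lt.1 fun h => hb (hlt _ h))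

theorem xor_eq_ite_of_lt_two {x q : ℕ} (hq : q < 2) :
    x ^^^ q = if q = 0 then x else if x % 2 = 0 then x + 1 else x - 1 := by
  interval_cases q
  · simp
  · rw [if_neg one_ne_zero]
    split_ifs with h
    · exact Nat.xor_one_of_even (Nat.even_iff.2 h)
    · exact Nat.xor_one_of_odd (Nat.odd_iff.2 (by omega))

theorem mex_eq_xor {S : Set ℕ} {t p : ℕ} (hp : p < 2)
    (hS : ∀ m ∈ S, m = t ^^^ (1 - p) ∨
      ∃ t' q, q < 2 ∧ (t' + 1 < t ∨ t' + 1 = t ∧ q = p) ∧ m = t' ^^^ q)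
    (hflip : p = 1 → t ∈ S)
    (htail : ∀ t' q, q < 2 → (t' + 1 < t ∨ t' + 1 = t ∧ q = p) → t' ^^^ q ∈ S) :
    mex S = t ^^^ p := by
  apply mex_eq
  · intro m hm
    rw [xor_eq_ite_of_lt_two hp] at hm
    rcases (show m = t ∨ m + 1 = t ∨ m + 1 < t by split_ifs at hm <;> omega) with rfl | h | h
    · exact hflip (by split_ifs at hm <;> omega)
    · interval_cases p
      · simpa using htail m 0 two_pos (Or.inr ⟨h, rfl⟩)
      · have hm2 : m % 2 = 1 ∧ 1 ≤ m := by simp at hm; split_ifs at hm <;> omega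
        have := htail (m - 1) 1 one_lt_two (Or.inl (by omega))
        rwa [xor_eq_ite_of_lt_two one_lt_two, if_neg one_ne_zero, if_pos (by omega),
          Nat.sub_add_cancel hm2.2] at this
    · simpa using htail m 0 two_pos (Or.inl h)
  · intro ht
    rcases hS _ ht with h | ⟨t', q, hq, ht', h⟩
    · have := Nat.xor_right_inj.1 h
      omega
    · rw [xor_eq_ite_of_lt_two hp, xor_eq_ite_of_lt_two hq] at h
      split_ifs at h <;> omega

theorem grundyAux_block_append_replicate (k : ℕ) :
    ∀ {d e : Bool} {Q : List EdgeState} {t : ℕ}, IsBlock d e Q → Q.count none + t + 1 ≤ k →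
    grundyAux (lineMoves false true false) k (Q ++ replicate (t + 1) none) =
      t ^^^ blockParity d e Q := by
  induction k with
  | zero => intros; omega
  | succ k ih =>
    intro d e Q t hQ hk
    have hmoves := fun es ↦
      mem_lineMoves_append_replicate_iff (t := t) (es := es) hQ.getLast?_eq hQ.isChain
    have hset : ∀ {j c}, Q[j]? = some none → (Q.set j (some c)).IsChain Compat →
        grundyAux (lineMoves false true false) k (Q.set j (some c) ++ replicate (t + 1) none) =
          t ^^^ (1 - blockParity d e Q) := by
      intro j c hj hc
      have := count_none_set_add_one (c := c) hj
      rw [ih (hQ.set hj hc) (by omega), blockParity_set hj]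
    have htail : ∀ {i t' c}, t = i + 1 + t' → (i = 0 → c = e) →
        grundyAux (lineMoves false true false) k
            (Q ++ replicate i none ++ [some c] ++ replicate (t' + 1) none) =
          t' ^^^ blockParity d c (Q ++ replicate i none ++ [some c]) := by
      intro i t' c ht hc
      exact ih (hQ.append hc) (by simp; omega)
    refine mex_eq_xor (Nat.mod_lt _ two_pos) ?_ ?_ ?_
    · rintro _ ⟨es, hes, rfl⟩
      rcases (hmoves es).1 hes with ⟨j, c, hj, hc, rfl⟩ | ⟨i, t', c, rfl, hc, rfl⟩
      · exact Or.inl (hset hj hc)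
      refine Or.inr ⟨t', _, Nat.mod_lt _ two_pos, ?_, htail rfl hc⟩
      rcases i with _ | i
      · obtain rfl := hc rfl
        exact Or.inr ⟨by omega, by simp [blockParity]⟩
      · exact Or.inl (by omega)
    · intro hpar
      obtain ⟨j, c, hj, hc⟩ := hQ.exists_set_isChain hpar
      exact ⟨_, (hmoves _).2 (Or.inl ⟨j, c, hj, hc, rfl⟩), by
        rw [hset hj hc, hpar, Nat.sub_self, Nat.xor_zero]⟩
    · rintro t' q hq (h | ⟨h, rfl⟩)
      · obtain ⟨c, hc⟩ := exists_blockParity_append_eq d Q (t - 1 - t') hq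
        refine ⟨_, (hmoves _).2 (Or.inr ⟨t - 1 - t', t', c, by omega, by omega, rfl⟩), ?_⟩
        rw [htail (by omega) (by omega), hc]
      · exact ⟨_, (hmoves _).2 (Or.inr ⟨0, t', e, by omega, fun _ ↦ rfl, rfl⟩),
          by rw [htail (by omega) (fun _ ↦ rfl)]; simp [blockParity]⟩

end GameOfCycles

/-- For every `n ≥ 1`, the type-3 line sub-game of the standard
Game of Cycles (a pre-marked edge at the left end directed away from the path,
•←•—•⋯•—•) has Grundy value `n - 1`. -/
theorem line_type3_nimber_standard (n : ℕ) (hn : 1 ≤ n) :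
    lineNim false (some false) none n = n - 1 := by
  obtain ⟨t, rfl⟩ : ∃ t, n = t + 1 := ⟨n - 1, by omega⟩
  have hblock : GameOfCycles.IsBlock false false [some false] :=
    ⟨rfl, rfl, List.isChain_singleton _⟩
  have h := GameOfCycles.grundyAux_block_append_replicate (t + 2) (t := t) hblock (by simp)
  simpa [lineNim, GameOfCycles.blockParity] using h
end

section
/- For every natural number n ≥ 1, in the standard Game of Cycles, the line sub-games of type 5 — a path of n unmarked edges with pre-marked directed edges at both ends both pointing into the path (•→•—•⋯•—•←•) — and of type 6 — pre-marked directed edges at both ends both pointing away from the path (•←•—•⋯•—•→•) — each have Grundy value 1 if n is even and 0 if n is odd. -/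
/-!
A move marks exactly one edge and never touches the two pre-marked outer edges, which point in
opposite directions. So every option of a position has the other parity of unmarked edges, and the
Grundy value is `1` or `0` according to that parity as soon as every position with an even number
of unmarked edges has a move. In a position without a move, adjacent marked edges agree and every
unmarked edge sits between two opposite directions, so the direction changes exactly once per
unmarked edge; as the outer directions differ, that number is odd.
-/

lemma mex_eq_zero {S : Set ℕ} (h : 0 ∉ S) : mex S = 0 :=
  Nat.sInf_eq_zero.mpr (Or.inl h)

lemma mex_singleton_zero : mex {0} = 1 := by
  have : {n : ℕ | n ∉ ({0} : Set ℕ)} = Set.Ici 1 := by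
    ext n; simp [Nat.one_le_iff_ne_zero]
  rw [mex, this, csInf_Ici]

theorem grundyAux_eq_ite_even {α : Type} {moves : α → Set α} {P : α → Prop} {c : α → ℕ}
    (hstep : ∀ x, P x → ∀ y ∈ moves x, P y ∧ c x = c y + 1)
    (hmove : ∀ x, P x → Even (c x) → (moves x).Nonempty) :
    ∀ k x, P x → c x ≤ k → grundyAux moves k x = if Even (c x) then 1 else 0
  | 0, x, hx, hk => by
      obtain ⟨y, hy⟩ := hmove x hx (by simp [Nat.le_zero.mp hk])
      have := (hstep x hx y hy).2
      omega
  | k + 1, x, hx, hk => by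
      have hopt : grundyAux moves k '' moves x ⊆ {if Even (c x) then 0 else 1} := by
        rintro _ ⟨y, hy, rfl⟩
        obtain ⟨hPy, hcy⟩ := hstep x hx y hy
        rw [grundyAux_eq_ite_even hstep hmove k y hPy (by omega), hcy, Set.mem_singleton_iff]
        by_cases h : Even (c y) <;> simp [h, Nat.even_add_one]
      rw [grundyAux]
      by_cases hev : Even (c x)
      · rw [if_pos hev] at hopt ⊢
        rw [((hmove x hx hev).image _).subset_singleton_iff.mp hopt, mex_singleton_zero]
      · rw [if_neg hev] at hopt ⊢
        exact mex_eq_zero fun h0 => by simpa using hopt h0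

namespace EdgeState

/-- Two consecutive edges create neither a sink nor a source at their common vertex. -/
def Agree (x y : EdgeState) : Prop := ∀ p ∈ x, ∀ q ∈ y, p = q

@[simp] lemma agree_none_left (y : EdgeState) : Agree none y := by simp [Agree]
@[simp] lemma agree_none_right (x : EdgeState) : Agree x none := by simp [Agree]
@[simp] lemma agree_some_some {p q : Bool} : Agree (some p) (some q) ↔ p = q := by simp [Agree]

end EdgeState

open EdgeState

lemma lineOK_iff_isChain_agree (es : List EdgeState) :
    LineOK false true true es ↔ es.IsChain Agree := by
  have hpair : ∀ x y : EdgeState,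
      (¬(x = some true ∧ y = some false) ∧ ¬(x = some false ∧ y = some true)) ↔ Agree x y := by
    rintro (_ | _ | _) (_ | _ | _) <;> simp
  simp only [LineOK, List.isChain_iff_getElem, Bool.false_eq_true, false_or, true_or, and_true]
  constructor
  · rintro ⟨hsink, hsource⟩ i hi
    rw [← hpair]
    simp only [← Option.some_inj (a := es[i]), ← Option.some_inj (a := es[i + 1]),
      ← List.getElem?_eq_getElem]
    exact ⟨hsink i, hsource i⟩
  · intro h
    refine ⟨fun j ⟨hx, hy⟩ => ?_, fun j ⟨hx, hy⟩ => ?_⟩ <;>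
    · obtain ⟨hj, hy⟩ := List.getElem?_eq_some_iff.mp hy
      have hx := (List.getElem?_eq_getElem (by omega)).symm.trans hx
      simp_all [← hpair]

lemma count_none_set_some_add_one {es : List EdgeState} {j : ℕ} (hj : es[j]? = some none)
    (d : Bool) : (es.set j (some d)).count none + 1 = es.count none := by
  obtain ⟨hlt, hnone⟩ := List.getElem?_eq_some_iff.mp hj
  have hpos : 0 < es.count none := List.count_pos_iff.mpr (hnone ▸ List.getElem_mem hlt)
  rw [List.count_set hlt, hnone]
  simp only [beq_self_eq_true, if_true, reduceCtorEq, beq_iff_eq, if_false]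
  omega

lemma getElem?_set_of_getElem?_eq_some_some {es : List EdgeState} {j k : ℕ} {v : Bool}
    (hj : es[j]? = some none) (hk : es[k]? = some (some v)) (w : EdgeState) :
    (es.set j w)[k]? = some (some v) := by
  have hjk : j ≠ k := by rintro rfl; simp [hj] at hk
  rwa [List.getElem?_set_ne hjk]

/-- The parity hypothesis is the form that survives the induction: an unmarked edge blocked
between two opposite directions is skipped together with the reversed edge after it. -/
theorem exists_move_of_even_iff_ne {b : Bool} :
    ∀ (a : Bool) (t : List EdgeState), (some a :: t).IsChain Agree →
      (some a :: t).getLast? = some (some b) → (Even (t.count none) ↔ a ≠ b) →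
      ∃ j d, t[j]? = some none ∧ (some a :: t.set j (some d)).IsChain Agree
  | a, [], _, hlast, hpar => by
      simp_all
  | a, some c :: t, hchain, hlast, hpar => by
      obtain ⟨hac, htail⟩ := List.isChain_cons_cons.mp hchain
      obtain rfl := agree_some_some.mp hac
      obtain ⟨j, d, hj, hmove⟩ := exists_move_of_even_iff_ne a t htail
        (by simpa using hlast) (by simpa using hpar)
      exact ⟨j + 1, d, hj, List.isChain_cons_cons.mpr ⟨by simp, hmove⟩⟩
  | a, [none], _, hlast, _ => by
      simp at hlast
  | a, none :: none :: t, hchain, _, _ => by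
      refine ⟨0, a, rfl, ?_⟩
      simpa using (List.isChain_cons_cons.mp hchain).2
  | a, none :: some c :: t, hchain, hlast, hpar => by
      have htail := (List.isChain_cons_cons.mp (List.isChain_cons_cons.mp hchain).2).2
      by_cases hca : c = a
      · subst hca
        exact ⟨0, c, rfl, by simpa using htail⟩
      · obtain ⟨j, d, hj, hmove⟩ := exists_move_of_even_iff_ne c t htail
          (by simpa using hlast) (by
            simp only [List.count_cons, beq_self_eq_true, reduceCtorEq, beq_iff_eq, if_true,
              if_false, add_zero, Nat.even_add_one] at hpar
            rw [← not_iff_not, hpar]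
            cases a <;> cases b <;> cases c <;> simp_all)
        exact ⟨j + 2, d, hj, by simpa using hmove⟩

theorem grundyAux_lineMoves_of_ne {a b : Bool} (hab : a ≠ b) {es : List EdgeState}
    (hchain : es.IsChain Agree) (hhead : es.head? = some (some a))
    (hlast : es.getLast? = some (some b)) {k : ℕ} (hk : es.count none ≤ k) :
    grundyAux (lineMoves false true true) k es = if Even (es.count none) then 1 else 0 := by
  refine grundyAux_eq_ite_even
    (P := fun es => es.IsChain Agree ∧ es.head? = some (some a) ∧ es.getLast? = some (some b))
    ?_ ?_ k es ⟨hchain, hhead, hlast⟩ hk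
  · rintro x ⟨-, hhead, hlast⟩ _ ⟨j, d, hj, rfl, hok⟩
    rw [List.head?_eq_getElem?] at hhead ⊢
    rw [List.getLast?_eq_getElem?] at hlast ⊢
    rw [List.length_set]
    exact ⟨⟨(lineOK_iff_isChain_agree _).mp hok, getElem?_set_of_getElem?_eq_some_some hj hhead _,
      getElem?_set_of_getElem?_eq_some_some hj hlast _⟩, (count_none_set_some_add_one hj d).symm⟩
  · rintro (_ | ⟨x, t⟩) ⟨hchain, hhead, hlast⟩ heven
    · simp at hhead
    obtain rfl : x = some a := by simpa using hhead
    obtain ⟨j, d, hj, hmove⟩ := exists_move_of_even_iff_ne a t hchain hlast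
      (iff_of_true (by simpa using heven) hab)
    exact ⟨_, j + 1, d, hj, rfl, (lineOK_iff_isChain_agree _).mpr (by simpa using hmove)⟩

theorem lineNim_false_some_some_of_ne {a b : Bool} (hab : a ≠ b) {n : ℕ} (hn : 1 ≤ n) :
    lineNim false (some a) (some b) n = if Even n then 1 else 0 := by
  have hchain : (some a :: (List.replicate n none ++ [some b])).IsChain Agree := by
    obtain ⟨m, rfl⟩ := Nat.exists_eq_add_of_le' hn
    refine List.isChain_cons.mpr ⟨by simp [List.replicate_succ], ?_⟩
    exact (List.isChain_replicate_of_rel _ (agree_none_left none)).append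
      (List.isChain_singleton _) (by simp [List.getLast?_replicate])
  have hlast : (some a :: (List.replicate n none ++ [some b])).getLast? = some (some b) := by
    rw [← List.cons_append, List.getLast?_concat]
  have hcount : (some a :: (List.replicate n none ++ [some b])).count none = n := by simp
  have := grundyAux_lineMoves_of_ne hab hchain rfl hlast (k := n + 2) (by omega)
  simpa [lineNim, hcount] using this

/-- For every `n ≥ 1`, the type-5 line sub-game (both pre-marked
edges pointing into the path, •→•—•⋯•—•←•) and the type-6 line sub-game (both
pre-marked edges pointing away from the path, •←•—•⋯•—•→•) of the standard Game of
Cycles each have Grundy value `1` if `n` is even and `0` if `n` is odd. -/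
theorem line_type5_type6_nimber_standard (n : ℕ) (hn : 1 ≤ n) :
    lineNim false (some true) (some false) n = (if Even n then 1 else 0) ∧
    lineNim false (some false) (some true) n = (if Even n then 1 else 0) :=
  ⟨lineNim_false_some_some_of_ne (by decide) hn,
    lineNim_false_some_some_of_ne (by decide) hn⟩
end

section
/- Consider the six line sub-game types of Cycles with Sources on a path of n unmarked edges: type 1 has no pre-marked edges; type 2 has one pre-marked directed edge attached at the left end directed toward the path; type 3 has one pre-marked directed edge attached at the left end directed away from the path; type 4 has pre-marked directed edges at both ends pointing in the same direction along the path; type 5 has pre-marked directed edges at both ends both pointing into the path; type 6 has pre-marked directed edges at both ends both pointing away from the path. For every i ∈ {1,…,6} and every n ≥ 27, the Grundy value of the type-i game with n + 17 unmarked edges equals the Grundy value of the type-i game with n unmarked edges. -/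
/-- The optional pre-marked directed edges at the two ends of the path for the six
line sub-game types of Cycles with Sources:
type 1 (index 0): no pre-marked edges (•—•⋯•—•);
type 2 (index 1): left pre-marked edge directed toward the path (•→•—•⋯•—•);
type 3 (index 2): left pre-marked edge directed away from the path (•←•—•⋯•—•);
type 4 (index 3): pre-marked edges at both ends pointing in the same direction
along the path (•→•—•⋯•—•→•);
type 5 (index 4): both pre-marked edges pointing into the path (•→•—•⋯•—•←•);
type 6 (index 5): both pre-marked edges pointing away from the path (•←•—•⋯•—•→•). -/
def typeEnds (i : Fin 6) : Option Bool × Option Bool :=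
  match i.val with
  | 0 => (none, none)
  | 1 => (some true, none)
  | 2 => (some false, none)
  | 3 => (some true, some true)
  | 4 => (some true, some false)
  | _ => (some false, some true)

/-!
With sources allowed the only constraint is that no vertex be a sink, a condition on two
consecutive edges. Hence marking an edge splits a run of unmarked edges into two runs that no
longer interact, and a line position is a disjoint sum of runs, each determined by its length
and the directions of the two marked edges enclosing it; an endpoint is handled by a sentinel
edge pointing away from it if it is exempt and into it otherwise. By Sprague–Grundy the Grundy
value of a line game is the value of a single run, and run values satisfy an octal-game-like
recursion. Computing them up to length 87 shows period 17 from length 27 on, and the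
Guy–Smith argument propagates the period to all lengths.
-/

theorem mex_eq_of_forall_lt_mem {S : Set ℕ} {v : ℕ} (hv : v ∉ S) (hlt : ∀ u < v, u ∈ S) :
    mex S = v :=
  le_antisymm (Nat.sInf_le hv) (le_of_not_gt fun h =>
    Nat.sInf_mem (s := {n | n ∉ S}) ⟨v, hv⟩ (hlt _ h))

theorem grundyAux_eq_of_mex_property {α : Type} {moves : α → Set α} (P : α → Prop)
    (f μ : α → ℕ) (hP : ∀ x, P x → ∀ y ∈ moves x, P y)
    (hμ : ∀ x, P x → ∀ y ∈ moves x, μ y < μ x)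
    (hne : ∀ x, P x → ∀ y ∈ moves x, f y ≠ f x)
    (hex : ∀ x, P x → ∀ u < f x, ∃ y ∈ moves x, f y = u) :
    ∀ k x, P x → μ x ≤ k → grundyAux moves k x = f x := by
  intro k
  induction k with
  | zero =>
    intro x hx hμx
    have hfx : f x = 0 := by
      by_contra h
      obtain ⟨y, hy, -⟩ := hex x hx 0 (Nat.pos_of_ne_zero h)
      have := hμ x hx y hy
      omega
    rw [hfx]
    rfl
  | succ k ih =>
    intro x hx hμx
    have himage : grundyAux moves k '' moves x = f '' moves x :=
      Set.image_congr fun y hy => ih y (hP x hx y hy) (by have := hμ x hx y hy; omega)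
    rw [grundyAux, himage]
    exact mex_eq_of_forall_lt_mem (fun ⟨y, hy, hfy⟩ => hne x hx y hy hfy)
      fun u hu => hex x hx u hu

def mexFrom (l : List ℕ) : ℕ → ℕ → ℕ
  | 0, n => n
  | f + 1, n => if n ∈ l then mexFrom l f (n + 1) else n

theorem mexFrom_spec (l : List ℕ) (f n : ℕ) :
    (∀ k, n ≤ k → k < mexFrom l f n → k ∈ l) ∧ (mexFrom l f n ∉ l ∨ mexFrom l f n = n + f) := by
  induction f generalizing n with
  | zero => exact ⟨fun k h1 h2 => absurd h2 (by simp only [mexFrom]; omega), Or.inr rfl⟩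
  | succ f ih =>
    by_cases hn : n ∈ l
    · obtain ⟨hlt, hres⟩ := ih (n + 1)
      simp only [mexFrom, if_pos hn]
      refine ⟨fun k h1 h2 => ?_, hres.imp_right fun h => by omega⟩
      rcases h1.eq_or_lt with rfl | h1
      · exact hn
      · exact hlt k h1 h2
    · simp only [mexFrom, if_neg hn]
      exact ⟨fun k h1 h2 => absurd h2 (by omega), Or.inl hn⟩

/-- The fuel `l.sum + 1` exceeds every element of `l`. -/
def listMex (l : List ℕ) : ℕ := mexFrom l (l.sum + 1) 0

theorem listMex_not_mem (l : List ℕ) : listMex l ∉ l := by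
  rcases (mexFrom_spec l (l.sum + 1) 0).2 with h | h
  · exact h
  · intro hmem
    have := List.le_sum_of_mem hmem
    rw [listMex, h] at this
    omega

theorem mem_of_lt_listMex {l : List ℕ} {u : ℕ} (hu : u < listMex l) : u ∈ l :=
  (mexFrom_spec l (l.sum + 1) 0).1 u (Nat.zero_le u) hu

theorem listMex_congr {l₁ l₂ : List ℕ} (h : ∀ x, x ∈ l₁ ↔ x ∈ l₂) : listMex l₁ = listMex l₂ :=
  le_antisymm
    (le_of_not_gt fun hlt => listMex_not_mem l₂ ((h _).1 (mem_of_lt_listMex hlt)))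
    (le_of_not_gt fun hlt => listMex_not_mem l₁ ((h _).2 (mem_of_lt_listMex hlt)))

/-- The vertex between consecutive edges `x` and `y` is not a sink. -/
def NoSink (x y : EdgeState) : Prop := ¬(x = some true ∧ y = some false)

instance : DecidableRel NoSink := fun _ _ => inferInstanceAs (Decidable ¬_)

def SegMoveLegal (a b : Bool) (m j : ℕ) (d : Bool) : Prop :=
  (j = 0 → NoSink (some a) (some d)) ∧ (j + 1 = m → NoSink (some d) (some b))

instance (a b : Bool) (m j : ℕ) (d : Bool) : Decidable (SegMoveLegal a b m j d) :=
  inferInstanceAs (Decidable (_ ∧ _))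

/-- If `g a b k` is the value of a run of `k` unmarked edges between marked edges directed `a`
and `b`, these are the values of the options of such a run of length `m`: a move splits it
into two independent runs. -/
def segOptions (g : Bool → Bool → ℕ → ℕ) (a b : Bool) (m : ℕ) : List ℕ :=
  (List.range m).flatMap fun j =>
    ([true, false].filter fun d => decide (SegMoveLegal a b m j d)).map fun d =>
      g a d j ^^^ g d b (m - 1 - j)

theorem mem_segOptions {g : Bool → Bool → ℕ → ℕ} {a b : Bool} {m x : ℕ} :
    x ∈ segOptions g a b m ↔
      ∃ j < m, ∃ d, SegMoveLegal a b m j d ∧ x = g a d j ^^^ g d b (m - 1 - j) := by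
  simp only [segOptions, List.mem_flatMap, List.mem_range, List.mem_map, List.mem_filter,
    decide_eq_true_eq]
  constructor
  · rintro ⟨j, hj, d, ⟨-, hd⟩, rfl⟩
    exact ⟨j, hj, d, hd, rfl⟩
  · rintro ⟨j, hj, d, hd, rfl⟩
    exact ⟨j, hj, d, ⟨by cases d <;> simp, hd⟩, rfl⟩

theorem segOptions_congr {g₁ g₂ : Bool → Bool → ℕ → ℕ} {m : ℕ}
    (h : ∀ a b k, k < m → g₁ a b k = g₂ a b k) (a b : Bool) :
    segOptions g₁ a b m = segOptions g₂ a b m :=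
  List.flatMap_congr fun j hj => List.map_congr_left fun d _ => by
    have := List.mem_range.1 hj
    rw [h a d j this, h d b (m - 1 - j) (by omega)]

section Periodicity

variable {g : Bool → Bool → ℕ → ℕ} {s p m : ℕ}

/-- A move at `j` in a run of `m + p` edges is matched in the run of `m` edges by the move
at `j - p` if the left part is long, and by the move at `j` otherwise. -/
theorem mem_segOptions_of_mem_add (hs : 0 < s) (hm : 2 * s + p ≤ m)
    (ih : ∀ k, s ≤ k → k < m → ∀ a b, g a b (k + p) = g a b k) {a b : Bool} {x : ℕ}
    (hx : x ∈ segOptions g a b (m + p)) : x ∈ segOptions g a b m := by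
  obtain ⟨j, hj, d, ⟨hleft, hright⟩, rfl⟩ := mem_segOptions.1 hx
  rw [mem_segOptions]
  by_cases hjs : s + p ≤ j
  · refine ⟨j - p, by omega, d, ⟨fun h => by omega, fun h => hright (by omega)⟩, ?_⟩
    rw [← ih (j - p) (by omega) (by omega), Nat.sub_add_cancel (by omega),
      show m - 1 - (j - p) = m + p - 1 - j by omega]
  · refine ⟨j, by omega, d, ⟨hleft, fun h => by omega⟩, ?_⟩
    rw [← ih (m - 1 - j) (by omega) (by omega), show m - 1 - j + p = m + p - 1 - j by omega]

theorem mem_segOptions_add_of_mem (hs : 0 < s) (hm : 2 * s + p ≤ m)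
    (ih : ∀ k, s ≤ k → k < m → ∀ a b, g a b (k + p) = g a b k) {a b : Bool} {x : ℕ}
    (hx : x ∈ segOptions g a b m) : x ∈ segOptions g a b (m + p) := by
  obtain ⟨j, hj, d, ⟨hleft, hright⟩, rfl⟩ := mem_segOptions.1 hx
  rw [mem_segOptions]
  by_cases hjs : s ≤ j
  · refine ⟨j + p, by omega, d, ⟨fun h => by omega, fun h => hright (by omega)⟩, ?_⟩
    rw [ih j hjs hj, show m + p - 1 - (j + p) = m - 1 - j by omega]
  · refine ⟨j, by omega, d, ⟨hleft, fun h => by omega⟩, ?_⟩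
    rw [← ih (m - 1 - j) (by omega) (by omega), show m - 1 - j + p = m + p - 1 - j by omega]

/-- The Guy–Smith argument for octal games: every split of a run of length at least `2s + p`
leaves a left part of length at least `s + p` or a right part of length at least `s`. -/
theorem periodic_of_periodic_on_base (hg : ∀ a b m, g a b m = listMex (segOptions g a b m))
    (hs : 0 < s) (hbase : ∀ m, s ≤ m → m < 2 * s + p → ∀ a b, g a b (m + p) = g a b m) :
    ∀ m, s ≤ m → ∀ a b, g a b (m + p) = g a b m := by
  intro m
  induction m using Nat.strong_induction_on with
  | _ m ih =>
    intro hsm a b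
    rcases lt_or_ge m (2 * s + p) with hm | hm
    · exact hbase m hsm hm a b
    · have ih' : ∀ k, s ≤ k → k < m → ∀ a b, g a b (k + p) = g a b k :=
        fun k hk hkm => ih k hkm hk
      rw [hg, hg a b m]
      exact listMex_congr fun x =>
        ⟨mem_segOptions_of_mem_add hs hm ih', mem_segOptions_add_of_mem hs hm ih'⟩

end Periodicity

def rowIndex (a b : Bool) : ℕ := cond a (cond b 0 1) (cond b 2 3)

def tableLookup (T : List (List ℕ)) (a b : Bool) (k : ℕ) : ℕ :=
  (T.getD k []).getD (rowIndex a b) 0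

/-- The run values of lengths `< n`, one row per length, so that the kernel computes each of
them only once. -/
def segTable : ℕ → List (List ℕ)
  | 0 => []
  | n + 1 =>
    let T := segTable n
    T ++ [[true, false].flatMap fun a => [true, false].map fun b =>
      listMex (segOptions (tableLookup T) a b n)]

/-- Grundy value of a run of `m` unmarked edges enclosed by marked edges with directions `a`
(on the left) and `b` (on the right), `true` meaning rightwards. -/
def segValue (a b : Bool) (m : ℕ) : ℕ := tableLookup (segTable (m + 1)) a b m

theorem segTable_length (n : ℕ) : (segTable n).length = n := by
  induction n with
  | zero => rfl
  | succ n ih => simp [segTable, ih]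

theorem tableLookup_segTable {k n : ℕ} (hk : k < n) (a b : Bool) :
    tableLookup (segTable n) a b k = segValue a b k := by
  induction n with
  | zero => omega
  | succ n ih =>
    rcases (Nat.lt_succ_iff.1 hk).lt_or_eq with hk | rfl
    · rw [← ih hk]
      simp only [tableLookup, segTable, List.getD_eq_getElem?_getD,
        List.getElem?_append_left (by rw [segTable_length]; exact hk)]
    · rfl

theorem segValue_eq (a b : Bool) (m : ℕ) :
    segValue a b m = listMex (segOptions segValue a b m) := by
  have hrow : segValue a b m = listMex (segOptions (tableLookup (segTable m)) a b m) := by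
    simp only [segValue, tableLookup, segTable, List.getD_eq_getElem?_getD]
    rw [List.getElem?_append_right (segTable_length m).le, segTable_length, Nat.sub_self]
    cases a <;> cases b <;> rfl
  rw [hrow, segOptions_congr fun a b k hk => tableLookup_segTable hk a b]

theorem segValue_zero (a b : Bool) : segValue a b 0 = 0 := by
  cases a <;> cases b <;> rfl

theorem segValue_move_ne {a b d : Bool} {m j : ℕ} (hj : j < m) (hd : SegMoveLegal a b m j d) :
    segValue a d j ^^^ segValue d b (m - 1 - j) ≠ segValue a b m := fun h => by
  apply listMex_not_mem (segOptions segValue a b m)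
  rw [← segValue_eq, mem_segOptions]
  exact ⟨j, hj, d, hd, h.symm⟩

theorem exists_segValue_move {a b : Bool} {m u : ℕ} (hu : u < segValue a b m) :
    ∃ j < m, ∃ d, SegMoveLegal a b m j d ∧ u = segValue a d j ^^^ segValue d b (m - 1 - j) := by
  rw [segValue_eq] at hu
  exact mem_segOptions.1 (mem_of_lt_listMex hu)

theorem segValue_periodic_base (m : ℕ) (h27 : 27 ≤ m) (h71 : m < 71) (a b : Bool) :
    segValue a b (m + 17) = segValue a b m := by
  have hcheck : ∀ k < 44, ∀ a b : Bool,
      tableLookup (segTable 88) a b (k + 44) = tableLookup (segTable 88) a b (k + 27) := by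
    decide +kernel
  have := hcheck (m - 27) (by omega) a b
  rwa [tableLookup_segTable (by omega), tableLookup_segTable (by omega),
    show m - 27 + 44 = m + 17 by omega, show m - 27 + 27 = m by omega] at this

theorem segValue_periodic {m : ℕ} (hm : 27 ≤ m) (a b : Bool) :
    segValue a b (m + 17) = segValue a b m :=
  periodic_of_periodic_on_base segValue_eq (by norm_num)
    (fun m h27 h71 => segValue_periodic_base m h27 h71) m hm a b

/-- `chainValue a k t` is the value of the position made of an edge directed `a`, then `k`
unmarked edges, then `t`: the xor of the values of its runs of unmarked edges. -/
def chainValue : Bool → ℕ → List EdgeState → ℕ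
  | _, _, [] => 0
  | a, k, none :: t => chainValue a (k + 1) t
  | a, k, some d :: t => segValue a d k ^^^ chainValue d 0 t

inductive ClosedRuns : List EdgeState → Prop
  | nil : ClosedRuns []
  | run (m : ℕ) (c : Bool) {rest : List EdgeState} :
      ClosedRuns rest → ClosedRuns (List.replicate m none ++ some c :: rest)

theorem ClosedRuns.cons_none {t : List EdgeState} (ht : ClosedRuns t) (hne : t ≠ []) :
    ClosedRuns (none :: t) := by
  cases ht with
  | nil => exact absurd rfl hne
  | run m c hrest => exact .run (m + 1) c hrest

theorem closedRuns_append_singleton (es : List EdgeState) (b : Bool) :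
    ClosedRuns (es ++ [some b]) := by
  induction es with
  | nil => exact .run 0 b .nil
  | cons x es ih =>
    cases x with
    | none => exact ih.cons_none (by simp)
    | some c => exact .run 0 c ih

section RunLists

variable {m : ℕ} {x : EdgeState} {rest : List EdgeState}

theorem getElem?_run_of_lt {j : ℕ} (hj : j < m) :
    (List.replicate m none ++ x :: rest)[j]? = some none := by
  rw [List.getElem?_append_left (by simpa using hj)]
  simp [hj]

theorem getElem?_run_add (i : ℕ) :
    (List.replicate m none ++ x :: rest)[m + i + 1]? = rest[i]? := by
  rw [List.getElem?_append_right (by simp only [List.length_replicate]; omega),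
    List.length_replicate, show m + i + 1 - m = i + 1 by omega]
  rfl

theorem set_run_add (i : ℕ) (v : EdgeState) :
    (List.replicate m none ++ x :: rest).set (m + i + 1) v =
      List.replicate m none ++ x :: rest.set i v := by
  rw [List.set_append_right _ _ (by simp only [List.length_replicate]; omega),
    List.length_replicate, show m + i + 1 - m = i + 1 by omega]
  rfl

theorem set_run_of_lt {j : ℕ} (hj : j < m) (l : List EdgeState) (v : EdgeState) :
    (List.replicate m none ++ l).set j v =
      List.replicate j none ++ v :: (List.replicate (m - 1 - j) none ++ l) := by
  obtain ⟨k, rfl⟩ := Nat.exists_eq_add_of_lt hj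
  rw [show j + k + 1 - 1 - j = k by omega, show j + k + 1 = j + (k + 1) by omega,
    ← List.replicate_append_replicate, List.append_assoc,
    List.set_append_right _ _ (by simp)]
  simp [List.replicate_succ]

end RunLists

theorem chainValue_replicate_append (a : Bool) (k m : ℕ) (t : List EdgeState) :
    chainValue a k (List.replicate m none ++ t) = chainValue a (k + m) t := by
  induction m generalizing k with
  | zero => rfl
  | succ m ih =>
    rw [List.replicate_succ, List.cons_append, chainValue, ih, Nat.add_right_comm,
      Nat.add_assoc]

theorem chainValue_run (a c : Bool) (m : ℕ) (rest : List EdgeState) :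
    chainValue a 0 (List.replicate m none ++ some c :: rest) =
      segValue a c m ^^^ chainValue c 0 rest := by
  rw [chainValue_replicate_append, Nat.zero_add, chainValue]

theorem chainValue_cons_some (a d : Bool) (t : List EdgeState) :
    chainValue a 0 (some d :: t) = chainValue d 0 t := by
  rw [chainValue, segValue_zero, Nat.zero_xor]

theorem isChain_cons_replicate_none (x : EdgeState) (m : ℕ) (l : List EdgeState) :
    List.IsChain NoSink (x :: (List.replicate (m + 1) none ++ l)) ↔ List.IsChain NoSink l := by
  induction m generalizing x with
  | zero =>
    simp only [zero_add, List.replicate_one, List.singleton_append, List.isChain_cons_cons,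
      List.isChain_cons (x := none)]
    simp [NoSink]
  | succ m ih =>
    rw [List.replicate_succ, List.cons_append, List.isChain_cons_cons, ih]
    simp [NoSink]

theorem isChain_run {a c : Bool} {m : ℕ} {rest : List EdgeState} :
    List.IsChain NoSink (some a :: (List.replicate m none ++ some c :: rest)) ↔
      (m = 0 → NoSink (some a) (some c)) ∧ List.IsChain NoSink (some c :: rest) := by
  cases m with
  | zero => simp [List.isChain_cons_cons]
  | succ m => simp [isChain_cons_replicate_none]

theorem chainValue_set_ne {t : List EdgeState} (ht : ClosedRuns t) {a : Bool} {j : ℕ}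
    {d : Bool} (hj : t[j]? = some none)
    (hchain : List.IsChain NoSink (some a :: t.set j (some d))) :
    chainValue a 0 (t.set j (some d)) ≠ chainValue a 0 t := by
  induction ht generalizing a j with
  | nil => simp at hj
  | run m c hrest ih =>
    rcases lt_trichotomy j m with hjm | rfl | hjm
    · rw [set_run_of_lt hjm, isChain_run, isChain_run] at hchain
      rw [set_run_of_lt hjm, chainValue_run, chainValue_run, chainValue_run, ← Nat.xor_assoc]
      exact fun h => segValue_move_ne hjm ⟨hchain.1, fun h' => hchain.2.1 (by omega)⟩
        (Nat.xor_left_injective h)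
    · simp at hj
    · obtain ⟨i, rfl⟩ := Nat.exists_eq_add_of_lt hjm
      rw [set_run_add, isChain_run] at hchain
      rw [getElem?_run_add] at hj
      rw [set_run_add, chainValue_run, chainValue_run]
      exact fun h => ih hj hchain.2 (Nat.xor_right_injective h)

theorem exists_set_chainValue_eq {t : List EdgeState} (ht : ClosedRuns t) {a : Bool}
    (hchain : List.IsChain NoSink (some a :: t)) {u : ℕ} (hu : u < chainValue a 0 t) :
    ∃ j d, t[j]? = some none ∧ List.IsChain NoSink (some a :: t.set j (some d)) ∧
      chainValue a 0 (t.set j (some d)) = u := by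
  induction ht generalizing a u with
  | nil => simp [chainValue] at hu
  | run m c hrest ih =>
    rw [isChain_run] at hchain
    rw [chainValue_run] at hu
    rcases Nat.lt_xor_cases hu with hu | hu
    · obtain ⟨j, hjm, d, hd, hsplit⟩ := exists_segValue_move hu
      refine ⟨j, d, getElem?_run_of_lt hjm, ?_, ?_⟩
      · rw [set_run_of_lt hjm, isChain_run, isChain_run]
        exact ⟨hd.1, fun h => hd.2 (by omega), hchain.2⟩
      · rw [set_run_of_lt hjm, chainValue_run, chainValue_run, ← Nat.xor_assoc, ← hsplit,
          Nat.xor_xor_cancel_right]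
    · obtain ⟨i, d, hi, hchain', hval⟩ := ih hchain.2 hu
      refine ⟨m + i + 1, d, by rwa [getElem?_run_add], ?_, ?_⟩
      · rw [set_run_add, isChain_run]
        exact ⟨hchain.1, hchain'⟩
      · rw [set_run_add, chainValue_run, hval, Nat.xor_comm u, Nat.xor_xor_cancel_left]

theorem isChain_noSink_iff {es : List EdgeState} :
    List.IsChain NoSink es ↔
      ∀ j : ℕ, ¬(es[j]? = some (some true) ∧ es[j + 1]? = some (some false)) := by
  rw [List.isChain_iff_getElem]
  constructor
  · rintro h j ⟨h1, h2⟩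
    obtain ⟨hj, e2⟩ := List.getElem?_eq_some_iff.1 h2
    obtain ⟨_, e1⟩ := List.getElem?_eq_some_iff.1 h1
    exact h j hj ⟨e1, e2⟩
  · intro h j hj
    rw [NoSink]
    rintro ⟨e1, e2⟩
    exact h j ⟨by rw [List.getElem?_eq_getElem (by omega), e1],
      by rw [List.getElem?_eq_getElem hj, e2]⟩

/-- The sentinel edges point away from an exempt endpoint and towards a non-exempt one. -/
theorem lineOK_true_iff_isChain {exL exR : Bool} {es : List EdgeState} (hne : es ≠ []) :
    LineOK true exL exR es ↔ List.IsChain NoSink (some (!exL) :: (es ++ [some exR])) := by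
  rw [LineOK, ← isChain_noSink_iff, List.isChain_cons, List.head?_append_of_ne_nil _ hne,
    List.isChain_append]
  simp only [true_or, and_true, List.isChain_singleton, true_and]
  generalize es.head? = x
  generalize es.getLast? = y
  cases exL <;> cases exR <;> cases x <;> cases y <;> simp [NoSink] <;> tauto

section LineGame

variable {exL exR : Bool} {es : List EdgeState} {j : ℕ}

theorem getElem?_append_some_eq_some_none {b : Bool} :
    (es ++ [some b])[j]? = some none ↔ es[j]? = some none := by
  rw [List.getElem?_append]
  split_ifs with hj
  · rfl
  · rw [List.getElem?_eq_none (l := es) (by omega), List.getElem?_singleton]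
    split_ifs <;> simp

theorem set_append_some_of_getElem? {b : Bool} (hj : es[j]? = some none) (v : EdgeState) :
    (es ++ [some b]).set j v = es.set j v ++ [some b] :=
  List.set_append_left j v (List.getElem?_eq_some_iff.1 hj).1

theorem set_ne_nil_of_getElem?_eq_some {x : EdgeState} (hj : es[j]? = some x) (v : EdgeState) :
    es.set j v ≠ [] := by
  rw [← List.length_pos_iff, List.length_set]
  exact lt_of_le_of_lt (Nat.zero_le j) (List.getElem?_eq_some_iff.1 hj).1

theorem count_none_set_lt (hj : es[j]? = some none) (d : Bool) :
    (es.set j (some d)).count none < es.count none := by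
  obtain ⟨hlt, hnone⟩ := List.getElem?_eq_some_iff.1 hj
  rw [List.count_set hlt, hnone]
  have := List.count_pos_iff.2 (List.mem_of_getElem? hj)
  simp only [BEq.rfl, if_true, reduceCtorEq, beq_iff_eq, if_false, add_zero]
  omega

theorem mem_lineMoves_true_iff {es' : List EdgeState} :
    es' ∈ lineMoves true exL exR es ↔ ∃ j d, es[j]? = some none ∧ es' = es.set j (some d) ∧
      List.IsChain NoSink (some (!exL) :: (es.set j (some d) ++ [some exR])) := by
  refine exists_congr fun j => exists_congr fun d => and_congr_right fun hj => ?_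
  refine and_congr_right fun h => ?_
  rw [h]
  exact lineOK_true_iff_isChain (set_ne_nil_of_getElem?_eq_some hj _)

theorem grundyAux_lineMoves_true (hne : es ≠ [])
    (hchain : List.IsChain NoSink (some (!exL) :: (es ++ [some exR]))) {k : ℕ}
    (hk : es.count none ≤ k) :
    grundyAux (lineMoves true exL exR) k es = chainValue (!exL) 0 (es ++ [some exR]) := by
  refine grundyAux_eq_of_mex_property
    (fun es => es ≠ [] ∧ List.IsChain NoSink (some (!exL) :: (es ++ [some exR])))
    (fun es => chainValue (!exL) 0 (es ++ [some exR])) (List.count none)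
    ?_ ?_ ?_ ?_ k es ⟨hne, hchain⟩ hk
  · rintro x - y hy
    obtain ⟨j, d, hj, rfl, hc⟩ := mem_lineMoves_true_iff.1 hy
    exact ⟨set_ne_nil_of_getElem?_eq_some hj _, hc⟩
  · rintro x - y hy
    obtain ⟨j, d, hj, rfl, -⟩ := mem_lineMoves_true_iff.1 hy
    exact count_none_set_lt hj d
  · rintro x - y hy
    obtain ⟨j, d, hj, rfl, hc⟩ := mem_lineMoves_true_iff.1 hy
    rw [← set_append_some_of_getElem? hj] at hc ⊢
    exact chainValue_set_ne (closedRuns_append_singleton x exR)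
      (getElem?_append_some_eq_some_none.2 hj) hc
  · rintro x ⟨-, hx⟩ u hu
    obtain ⟨j, d, hj, hc, hval⟩ :=
      exists_set_chainValue_eq (closedRuns_append_singleton x exR) hx hu
    rw [getElem?_append_some_eq_some_none] at hj
    rw [set_append_some_of_getElem? hj] at hc hval
    exact ⟨x.set j (some d), mem_lineMoves_true_iff.2 ⟨j, d, hj, rfl, hc⟩, hval⟩

end LineGame

theorem lineNim_true_eq_segValue (l r : Option Bool) {n : ℕ} (hn : 0 < n) :
    lineNim true l r n = segValue (l.getD true) (r.getD false) n := by
  obtain ⟨n, rfl⟩ := Nat.exists_eq_add_of_lt hn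
  unfold lineNim
  rw [grundyAux_lineMoves_true (by simp) ?_ List.count_le_length]
  · cases l <;> cases r <;> simp [chainValue_run, chainValue_cons_some, chainValue, segValue_zero]
  · cases l <;> cases r <;> simp [isChain_cons_replicate_none, NoSink]

/-- For each of the six line sub-game types of Cycles with Sources
and every `n ≥ 27`, the Grundy value of the type-`i` game with `n + 17` unmarked
edges equals the Grundy value of the type-`i` game with `n` unmarked edges. -/
theorem cws_line_types_periodic (i : Fin 6) (n : ℕ) (hn : 27 ≤ n) :
    lineNim true (typeEnds i).1 (typeEnds i).2 (n + 17) =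
      lineNim true (typeEnds i).1 (typeEnds i).2 n := by
  rw [lineNim_true_eq_segValue _ _ (by omega), lineNim_true_eq_segValue _ _ (by omega),
    segValue_periodic hn]
end

section
/- In the standard Game of Cycles, consider the line game obtained by cutting a cycle along a marked edge: a path of n unmarked edges with pre-marked directed edges at both ends, both pointing in the same direction along the path (•→•—•⋯•—•→•), where the two boundary nodes at the far ends (the endpoints of the pre-marked edges not on the path) are entirely exempt from the no-source/no-sink restriction. For every n ≥ 1, this game has Grundy value 1 if n is odd and 0 if n is even. -/
lemma mex_eq_one {S : Set ℕ} (h0 : 0 ∈ S) (h1 : 1 ∉ S) : mex S = 1 :=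
  (Nat.sInf_le h1).antisymm <| Nat.one_le_iff_ne_zero.mpr fun h =>
    (h ▸ Nat.sInf_mem (s := {n | n ∉ S}) ⟨1, h1⟩) h0

theorem grundyAux_eq_mod_two {α : Type} {moves : α → Set α} {S : Set α} {rank : α → ℕ}
    (hS : ∀ x ∈ S, ∀ y ∈ moves x, y ∈ S)
    (hrank : ∀ x ∈ S, ∀ y ∈ moves x, rank y + 1 = rank x)
    (hterminal : ∀ x ∈ S, moves x = ∅ → Even (rank x)) {k : ℕ} {x : α} (hx : x ∈ S)
    (hk : rank x ≤ k) : grundyAux moves k x = rank x % 2 := by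
  induction k generalizing x with
  | zero => simp [grundyAux, Nat.le_zero.mp hk]
  | succ k ih =>
    have hvalue : ∀ y ∈ moves x, grundyAux moves k y = (rank x + 1) % 2 := fun y hy => by
      have := hrank x hx y hy
      rw [ih (hS x hx y hy) (by omega)]
      omega
    show mex _ = _
    rcases Nat.mod_two_eq_zero_or_one (rank x) with heven | hodd
    · rw [heven]
      refine mex_eq_zero fun ⟨y, hy, h0⟩ => ?_
      have := hvalue y hy
      omega
    · obtain ⟨y, hy⟩ : (moves x).Nonempty := Set.nonempty_iff_ne_empty.mpr fun h =>
        Nat.not_even_iff.mpr hodd (hterminal x hx h)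
      rw [hodd]
      refine mex_eq_one ⟨y, hy, ?_⟩ fun ⟨z, hz, h1⟩ => ?_
      · rw [hvalue y hy]; omega
      · have := hvalue z hz; omega

/-- Two adjacent edges marked in opposite directions make their common vertex a sink or a
source. -/
def Opposed (x y : EdgeState) : Prop := ∃ a, x = some a ∧ y = some !a

@[simp]
lemma opposed_some_some {a b : Bool} : Opposed (some a) (some b) ↔ b = !a := by
  simp [Opposed]

@[simp]
lemma not_opposed_none_left (y : EdgeState) : ¬ Opposed none y := by
  simp [Opposed]

@[simp]
lemma not_opposed_none_right (x : EdgeState) : ¬ Opposed x none := by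
  simp [Opposed]

abbrev Admissible (es : List EdgeState) : Prop := es.IsChain fun x y => ¬ Opposed x y

lemma lineOK_iff_admissible (es : List EdgeState) :
    LineOK false true true es ↔ Admissible es := by
  simp only [LineOK, List.isChain_iff_getElem, Opposed]
  simp only [Bool.forall_bool, Bool.not_false, Bool.not_true, not_exists, not_and,
    List.getElem?_eq_some_iff, forall_exists_index, Bool.false_eq_true, true_or, and_true]
  grind

lemma admissible_of_forall_mem_ne {a : Bool} {es : List EdgeState}
    (h : ∀ x ∈ es, x ≠ some !a) : Admissible es := by
  refine (List.pairwise_of_forall_mem_list fun x hx y hy => ?_).isChain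
  rintro ⟨c, rfl, rfl⟩
  cases a <;> cases c
  all_goals first | exact h _ hx rfl | exact h _ hy rfl

def Terminal (es : List EdgeState) : Prop :=
  ∀ j d, es[j]? = some none → ¬ Admissible (es.set j (some d))

lemma terminal_of_lineMoves_eq_empty {es : List EdgeState}
    (h : lineMoves false true true es = ∅) : Terminal es := fun j d hj hadm =>
  h.subset ⟨j, d, hj, rfl, (lineOK_iff_admissible _).mpr hadm⟩

lemma Terminal.of_append {p l : List EdgeState} {c : Bool} (h : Terminal (p ++ some c :: l))
    (hp : Admissible (p ++ [some c])) : Terminal (some c :: l) := by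
  rintro (_ | j) d hj hadm
  · simp at hj
  · refine h (p.length + (j + 1)) d (by simpa [List.getElem?_append_right] using hj) ?_
    rw [List.set_append_right _ _ (by omega), Nat.add_sub_cancel_left]
    exact List.isChain_split.mpr ⟨hp, hadm⟩

theorem Terminal.even_count_none : ∀ {es : List EdgeState} {a b : Bool}, Admissible es →
    Terminal es → es.head? = some (some a) → es.getLast? = some (some b) →
    Even (es.count none + if a = b then 0 else 1)
  | [some c], a, b, _, _, ha, hb => by simp_all
  | some c :: some c' :: rest, a, b, hadm, hterm, ha, hb => by
    obtain rfl : c = a := by simpa using ha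
    obtain rfl : c' = c := by simpa using (List.isChain_cons_cons.mp hadm).1
    simpa using Terminal.even_count_none hadm.tail
      (hterm.of_append (p := [some c']) (by simp)) rfl (by simpa using hb)
  | some c :: none :: rest, a, b, hadm, hterm, ha, hb => by
    obtain rfl : c = a := by simpa using ha
    have hblocked : ¬ Admissible (some c :: some c :: rest) := hterm 1 c rfl
    match rest, hadm, hterm, hb, hblocked with
    | [], _, _, hb, _ => simp at hb
    | none :: rest, hadm, _, _, hblocked => simp_all
    | some c' :: rest, hadm, hterm, hb, hblocked =>
      simp only [List.isChain_cons_cons] at hadm hblocked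
      obtain rfl : c' = !c := Bool.eq_not.mpr (by simpa [hadm.2.2] using hblocked)
      have := Terminal.even_count_none hadm.2.2
        (hterm.of_append (p := [some c, none]) (by simp)) rfl (by simpa using hb)
      cases c <;> cases b <;> simp_all [Nat.even_add_one]
  | [], _, _, _, _, ha, _ => by simp at ha
  | none :: _, _, _, _, _, ha, _ => by simp at ha

def framed (a b : Bool) : Set (List EdgeState) :=
  {es | Admissible es ∧ es.head? = some (some a) ∧ es.getLast? = some (some b)}

lemma framed_of_mem_lineMoves {a b : Bool} {es es' : List EdgeState} (h : es ∈ framed a b)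
    (hmove : es' ∈ lineMoves false true true es) :
    es' ∈ framed a b ∧ es'.count none + 1 = es.count none := by
  obtain ⟨j, d, hj, rfl, hok⟩ := hmove
  obtain ⟨-, ha, hb⟩ := h
  obtain ⟨hjlen, hnone⟩ := List.getElem?_eq_some_iff.mp hj
  have hj0 : j ≠ 0 := by rintro rfl; simp [List.head?_eq_getElem?, hj] at ha
  have hjlast : j ≠ es.length - 1 := by
    rintro rfl; simp [List.getLast?_eq_getElem?, hj] at hb
  refine ⟨⟨(lineOK_iff_admissible _).mp hok, ?_, ?_⟩, ?_⟩
  · rwa [List.head?_eq_getElem?, List.getElem?_set_ne hj0, ← List.head?_eq_getElem?]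
  · rwa [List.getLast?_eq_getElem?, List.length_set, List.getElem?_set_ne hjlast,
      ← List.getLast?_eq_getElem?]
  · have : 0 < es.count none := List.count_pos_iff.mpr (List.mem_of_getElem? hj)
    rw [List.count_set hjlen, hnone]
    simp only [BEq.rfl, if_true, reduceCtorEq, beq_iff_eq, if_false]
    omega

theorem grundyAux_lineMoves_of_mem_framed {a b : Bool} {es : List EdgeState}
    (h : es ∈ framed a b) {k : ℕ} (hk : es.count none + (if a = b then 0 else 1) ≤ k) :
    grundyAux (lineMoves false true true) k es = (es.count none + if a = b then 0 else 1) % 2 :=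
  grundyAux_eq_mod_two (fun _ hx _ hy => (framed_of_mem_lineMoves hx hy).1)
    (fun _ hx _ hy => by rw [← (framed_of_mem_lineMoves hx hy).2]; ring)
    (fun _ ⟨hadm, ha, hb⟩ hempty =>
      (terminal_of_lineMoves_eq_empty hempty).even_count_none hadm ha hb) h hk

theorem cut_cycle_type1_nimber_standard_general (n : ℕ) :
    lineNim false (some true) (some true) n = if Odd n then 1 else 0 := by
  have hframed : some true :: List.replicate n none ++ [some true] ∈ framed true true := by
    refine ⟨admissible_of_forall_mem_ne (a := true) ?_, rfl, List.getLast?_concat⟩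
    simp +contextual [or_imp]
  simp only [lineNim, Option.map_some, Option.toList_some, Option.isSome_some,
    List.singleton_append]
  rw [grundyAux_lineMoves_of_mem_framed hframed (by simp; omega)]
  simp [Nat.odd_iff]
  split <;> omega

/-- Cutting a cycle along a marked edge in the standard Game of
Cycles yields a path of `n` unmarked edges with pre-marked directed edges at both
ends, both pointing in the same direction along the path (•→•—•⋯•—•→•), the two
far-end boundary nodes being exempt from the no-source/no-sink rule. For every
`n ≥ 1` this game has Grundy value `1` if `n` is odd and `0` if `n` is even. -/
theorem cut_cycle_type1_nimber_standard (n : ℕ) (hn : 1 ≤ n) :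
    lineNim false (some true) (some true) n = if Odd n then 1 else 0 :=
  cut_cycle_type1_nimber_standard_general n
end
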